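/- Let F ≡ Q₁x₁. … Qₙxₙ. E(x₁,…,xₙ) be a closed quantified Boolean formula in prenex form, with Qᵢ ∈ {∀,∃} and E a Boolean combination of x₁,…,xₙ. Let φ be the PTLTL^FO formula T₁Q₁x₁:p₁. … TₙQₙxₙ:pₙ. E(true(x₁),…,true(xₙ)), where Tᵢ = G⁻¹ if Qᵢ = ∀ and Tᵢ = F⁻¹ if Qᵢ = ∃, with distinct unary uninterpreted predicates p₁,…,pₙ and a further unary uninterpreted predicate true. Let h be the history of 2n sessions {pₙ(0), true(1)}; {pₙ(1), true(1)}; … ; {p₁(0), true(1)}; {p₁(1), true(1)} (in that order). Then h is trace-like, and F evaluates to true if and only if h ⊨ φ. -/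

import Mathlib

/-- Terms: variables, constants, and applications of interpreted function symbols
(function symbols are named by natural numbers). -/
inductive Tm (C : Type) : Type where
  | var : ℕ → Tm C
  | const : C → Tm C
  | func : ℕ → List (Tm C) → Tm C

/-- Evaluation of a term under an interpretation `F` of the function symbols and an
environment (variable assignment) `ρ`. -/
def Tm.eval {C : Type} (F : ℕ → List C → C) (ρ : ℕ → C) : Tm C → C
  | .var x => ρ x
  | .const c => c
  | .func f args => F f (args.attach.map fun t => Tm.eval F ρ t.1)
  decreasing_by simp_wf; have := List.sizeOf_lt_of_mem t.2; omega

/-- Variables occurring in a term. -/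
def Tm.fv {C : Type} : Tm C → List ℕ
  | .var x => [x]
  | .const _ => []
  | .func _ args => args.attach.flatMap fun t => Tm.fv t.1
  decreasing_by simp_wf; have := List.sizeOf_lt_of_mem t.2; omega

/-- PTLTL^FO formulas: uninterpreted predicate atoms, interpreted relation atoms,
conjunction, negation, "previous" X⁻¹, "since" S, and the guarded universal
quantifier `all xs p ψ` (∀(x₁,…,xₙ):p. ψ). -/
inductive Fm (C : Type) : Type where
  | atom : ℕ → List (Tm C) → Fm C
  | rel : ℕ → List (Tm C) → Fm C
  | and : Fm C → Fm C → Fm C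
  | not : Fm C → Fm C
  | prev : Fm C → Fm C
  | since : Fm C → Fm C → Fm C
  | all : List ℕ → ℕ → Fm C → Fm C

/-- Free variables of a formula. -/
def Fm.fv {C : Type} : Fm C → List ℕ
  | .atom _ ts => ts.flatMap Tm.fv
  | .rel _ ts => ts.flatMap Tm.fv
  | .and a b => a.fv ++ b.fv
  | .not a => a.fv
  | .prev a => a.fv
  | .since a b => a.fv ++ b.fv
  | .all xs _ a => a.fv.filter (fun v => v ∉ xs)

/-- A formula is closed if it has no free variables. -/
def Fm.Closed {C : Type} (φ : Fm C) : Prop := φ.fv = []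

/-- A session is a finite set of events `p(c₁,…,cₙ)`. -/
abbrev Session (C : Type) := Finset (ℕ × List C)

/-- A history is a (finite) list of sessions. -/
abbrev History (C : Type) := List (Session C)

/-- Update an environment on the list of variables `xs` with the list of values `cs`. -/
def updEnv {C : Type} (ρ : ℕ → C) (xs : List ℕ) (cs : List C) : ℕ → C :=
  fun v => ((xs.zip cs).lookup v).getD (ρ v)

/-- The forcing relation `(h,i) ⊨ φ` (1-based session index `i`, environment `ρ`),
with interpretation `F` of function symbols and `R` of relation symbols. -/
def Sat {C : Type} (F : ℕ → List C → C) (R : ℕ → List C → Bool) (h : History C) :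
    ℕ → (ℕ → C) → Fm C → Prop
  | i, ρ, .atom p ts => (p, ts.map (Tm.eval F ρ)) ∈ h.getD (i - 1) ∅
  | i, ρ, .rel r ts => R r (ts.map (Tm.eval F ρ)) = true
  | i, ρ, .and a b => Sat F R h i ρ a ∧ Sat F R h i ρ b
  | i, ρ, .not a => ¬ Sat F R h i ρ a
  | i, ρ, .prev a => 1 < i ∧ Sat F R h (i - 1) ρ a
  | i, ρ, .since a b =>
      ∃ j, 1 ≤ j ∧ j ≤ i ∧ Sat F R h j ρ b ∧ ∀ k, j < k → k ≤ i → Sat F R h k ρ a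
  | i, ρ, .all xs p a =>
      ∀ cs : List C, cs.length = xs.length → (p, cs) ∈ h.getD (i - 1) ∅ →
        Sat F R h i (updEnv ρ xs cs) a

/-- A tautology `⊤` (definable from the connectives: `¬(p ∧ ¬p)`). -/
def fmTop {C : Type} : Fm C := .not (.and (.atom 0 []) (.not (.atom 0 [])))

/-- `F⁻¹ψ := ⊤ S ψ` ("sometime in the past"). -/
def fmSometime {C : Type} (a : Fm C) : Fm C := .since fmTop a

/-- `G⁻¹ψ := ¬F⁻¹¬ψ` ("always in the past"). -/
def fmAlways {C : Type} (a : Fm C) : Fm C := .not (fmSometime (.not a))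

/-- Boolean expressions over variables (named by natural numbers). -/
inductive BExpr : Type where
  | var : ℕ → BExpr
  | and : BExpr → BExpr → BExpr
  | or : BExpr → BExpr → BExpr
  | not : BExpr → BExpr

/-- Evaluation of a Boolean expression under an assignment. -/
def BExpr.eval (v : ℕ → Bool) : BExpr → Bool
  | .var x => v x
  | .and a b => a.eval v && b.eval v
  | .or a b => a.eval v || b.eval v
  | .not a => !(a.eval v)

/-- Variables of a Boolean expression. -/
def BExpr.vars : BExpr → List ℕ
  | .var x => [x]
  | .and a b => a.vars ++ b.vars
  | .or a b => a.vars ++ b.vars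
  | .not a => a.vars

/-- Standard QBF semantics of the prenex formula `Q₁x_k. Q₂x_{k+1}. … E`;
the quantifier prefix is given as a list of Booleans (`true` = ∀, `false` = ∃), and
the variable quantified at position `j` of the prefix is `x_{k+j}`. -/
def QbfTrue (v : ℕ → Bool) : ℕ → List Bool → BExpr → Prop
  | _, [], E => E.eval v = true
  | k, q :: qs, E =>
      if q then ∀ b : Bool, QbfTrue (fun m => if m = k then b else v m) (k + 1) qs E
      else ∃ b : Bool, QbfTrue (fun m => if m = k then b else v m) (k + 1) qs E

/-- Translation of the matrix: each variable `xᵢ` is replaced by the atom `true(xᵢ)`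
(the predicate `true` is predicate symbol `0`); disjunction is the derived connective. -/
def trE : BExpr → Fm ℕ
  | .var x => .atom 0 [.var x]
  | .and a b => .and (trE a) (trE b)
  | .or a b => .not (.and (.not (trE a)) (.not (trE b)))
  | .not a => .not (trE a)

/-- Translation of the prefix: `Qᵢxᵢ` becomes `TᵢQᵢxᵢ:pᵢ` where `Tᵢ = G⁻¹` if `Qᵢ = ∀`
and `Tᵢ = F⁻¹` if `Qᵢ = ∃` (predicate `pᵢ` is predicate symbol `i`, `∃x:p.ψ := ¬∀x:p.¬ψ`). -/
def trQ : ℕ → List Bool → BExpr → Fm ℕ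
  | _, [], E => trE E
  | k, q :: qs, E =>
      if q then fmAlways (.all [k] k (trQ (k + 1) qs E))
      else fmSometime (.not (.all [k] k (.not (trQ (k + 1) qs E))))

/-- The history of `2n` sessions
`{pₙ(0), true(1)}; {pₙ(1), true(1)}; … ; {p₁(0), true(1)}; {p₁(1), true(1)}`
(the predicate `true` is predicate symbol `0`, `pᵢ` is predicate symbol `i`). -/
def qbfHistory (n : ℕ) : History ℕ :=
  (List.range n).reverse.flatMap fun j =>
    [({(j + 1, [0]), (0, [1])} : Session ℕ), ({(j + 1, [1]), (0, [1])} : Session ℕ)]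

/-- A history is trace-like if no predicate occurs with two distinct argument tuples
in a single session. -/
def TraceLike {C : Type} (h : History C) : Prop :=
  ∀ i, 1 ≤ i → i ≤ h.length → ∀ p (t s : List C),
    (p, t) ∈ h.getD (i - 1) ∅ → (p, s) ∈ h.getD (i - 1) ∅ → t = s

/-! In `qbfHistory n` the predicate `pₖ` occurs only in the sessions `2(n-k)+1` and `2(n-k)+2`,
with arguments `0` and `1`, and `true(c)` holds in every session exactly for `c = 1`. Evaluated
at a session after these two, `G⁻¹∀xₖ:pₖ` (resp. `F⁻¹∃xₖ:pₖ`) therefore ranges over exactly these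
two sessions and binds `xₖ` to `0` and to `1`, i.e. it quantifies over both Boolean values of `xₖ`;
the rest of the formula is evaluated at one of these sessions, which lies after those of `pₖ₊₁`.
Induction on the prefix shows that `φ` holds under an environment `ρ` iff the QBF holds under the
assignment `x ↦ (ρ x = 1)`. -/

section Semantics

variable {C : Type} {F : ℕ → List C → C} {R : ℕ → List C → Bool} {h : History C}
  {i : ℕ} {ρ : ℕ → C}

lemma updEnv_singleton (ρ : ℕ → C) (x : ℕ) (c : C) :
    updEnv ρ [x] [c] = Function.update ρ x c := by
  funext m
  by_cases hm : m = x
  · simp [updEnv, hm]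
  · have hmx : (m == x) = false := beq_false_of_ne hm
    simp [updEnv, List.lookup, hmx, hm]

lemma sat_fmTop : Sat F R h i ρ fmTop := by
  simp [Sat, fmTop]

lemma sat_not_iff {a : Fm C} : Sat F R h i ρ (.not a) ↔ ¬ Sat F R h i ρ a := Iff.rfl

lemma sat_fmSometime_iff {a : Fm C} :
    Sat F R h i ρ (fmSometime a) ↔ ∃ j, 1 ≤ j ∧ j ≤ i ∧ Sat F R h j ρ a := by
  simp only [fmSometime, Sat]
  exact exists_congr fun j => by simp [sat_fmTop]

lemma sat_fmAlways_iff {a : Fm C} :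
    Sat F R h i ρ (fmAlways a) ↔ ∀ j, 1 ≤ j → j ≤ i → Sat F R h j ρ a := by
  simp only [fmAlways, Sat, sat_fmSometime_iff]
  simp

lemma sat_all_singleton_iff {x p : ℕ} {a : Fm C} :
    Sat F R h i ρ (.all [x] p a) ↔
      ∀ c, (p, [c]) ∈ h.getD (i - 1) ∅ → Sat F R h i (Function.update ρ x c) a := by
  simp only [Sat, List.length_singleton, List.length_eq_one_iff]
  constructor
  · intro H c hc
    simpa [updEnv_singleton] using H [c] ⟨c, rfl⟩ hc
  · rintro H _ ⟨c, rfl⟩ hc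
    simpa [updEnv_singleton] using H c hc

end Semantics

lemma sat_trE_iff {F : ℕ → List ℕ → ℕ} {R : ℕ → List ℕ → Bool} {h : History ℕ} {i : ℕ}
    {ρ : ℕ → ℕ} (E : BExpr) :
    Sat F R h i ρ (trE E) ↔ E.eval (fun m => decide ((0, [ρ m]) ∈ h.getD (i - 1) ∅)) = true := by
  induction E with
  | var x => simp [trE, Sat, BExpr.eval, Tm.eval]
  | and a b iha ihb => simp [trE, Sat, BExpr.eval, iha, ihb]
  | or a b iha ihb => simp [trE, Sat, BExpr.eval, iha, ihb, or_iff_not_and_not]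
  | not a iha => simp [trE, Sat, BExpr.eval, iha]

lemma qbfHistory_succ (n : ℕ) :
    qbfHistory (n + 1) = ({(n + 1, [0]), (0, [1])} : Session ℕ) ::
      ({(n + 1, [1]), (0, [1])} : Session ℕ) :: qbfHistory n := by
  simp [qbfHistory, List.range_succ]

lemma length_qbfHistory (n : ℕ) : (qbfHistory n).length = 2 * n := by
  induction n with
  | zero => rfl
  | succ n ih => simp [qbfHistory_succ, ih]; ring

lemma qbfHistory_getD {n m : ℕ} (hm : m < 2 * n) :
    (qbfHistory n).getD m ∅ = ({(n - m / 2, [m % 2]), (0, [1])} : Session ℕ) := by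
  induction n generalizing m with
  | zero => omega
  | succ n ih =>
    match m with
    | 0 | 1 => simp [qbfHistory_succ]
    | m + 2 =>
      rw [qbfHistory_succ, List.getD_cons_succ, List.getD_cons_succ, ih (by omega)]
      rw [show n + 1 - (m + 2) / 2 = n - m / 2 by omega, Nat.add_mod_right]

lemma mem_qbfHistory_getD_iff {n m p : ℕ} {cs : List ℕ} (hm : m < 2 * n) :
    (p, cs) ∈ (qbfHistory n).getD m ∅ ↔ p = n - m / 2 ∧ cs = [m % 2] ∨ p = 0 ∧ cs = [1] := by
  rw [qbfHistory_getD hm]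
  simp

lemma traceLike_qbfHistory (n : ℕ) : TraceLike (qbfHistory n) := by
  intro i hi hin p t s ht hs
  rw [length_qbfHistory] at hin
  rw [mem_qbfHistory_getD_iff (by omega)] at ht hs
  rcases ht with ⟨rfl, rfl⟩ | ⟨rfl, rfl⟩ <;> rcases hs with ⟨hp, rfl⟩ | ⟨hp, rfl⟩ <;>
    first | rfl | omega

lemma true_mem_qbfHistory_getD_iff {n m c : ℕ} (hm : m < 2 * n) :
    (0, [c]) ∈ (qbfHistory n).getD m ∅ ↔ c = 1 := by
  rw [mem_qbfHistory_getD_iff hm]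
  simp only [List.cons.injEq, and_true, true_and]
  omega

lemma pred_mem_qbfHistory_getD_iff {n k m c : ℕ} (hk : 1 ≤ k) (hkn : k ≤ n) (hm : m < 2 * n) :
    (k, [c]) ∈ (qbfHistory n).getD m ∅ ↔ ∃ b : Bool, m = 2 * (n - k) + b.toNat ∧ c = b.toNat := by
  rw [mem_qbfHistory_getD_iff hm]
  simp only [List.cons.injEq, and_true, Bool.exists_bool, Bool.toNat_false, Bool.toNat_true]
  omega

lemma forall_pred_mem_qbfHistory_iff {n k i : ℕ} (hk : 1 ≤ k) (hkn : k ≤ n)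
    (hi : 2 * (n + 1 - k) ≤ i) (hin : i ≤ 2 * n) (P : ℕ → ℕ → Prop) :
    (∀ j, 1 ≤ j → j ≤ i → ∀ c, (k, [c]) ∈ (qbfHistory n).getD (j - 1) ∅ → P j c) ↔
      ∀ b : Bool, P (2 * (n - k) + 1 + b.toNat) b.toNat := by
  constructor
  · intro H b
    have := Bool.toNat_le b
    exact H _ (by omega) (by omega) _
      ((pred_mem_qbfHistory_getD_iff hk hkn (by omega)).2 ⟨b, by omega, rfl⟩)
  · intro H j hj hji c hc
    obtain ⟨b, hjb, rfl⟩ := (pred_mem_qbfHistory_getD_iff hk hkn (by omega)).1 hc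
    convert H b using 2
    omega

lemma exists_pred_mem_qbfHistory_iff {n k i : ℕ} (hk : 1 ≤ k) (hkn : k ≤ n)
    (hi : 2 * (n + 1 - k) ≤ i) (hin : i ≤ 2 * n) (P : ℕ → ℕ → Prop) :
    (∃ j, 1 ≤ j ∧ j ≤ i ∧ ∃ c, (k, [c]) ∈ (qbfHistory n).getD (j - 1) ∅ ∧ P j c) ↔
      ∃ b : Bool, P (2 * (n - k) + 1 + b.toNat) b.toNat := by
  have := forall_pred_mem_qbfHistory_iff hk hkn hi hin (fun j c => ¬ P j c)
  rw [← not_iff_not]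
  simp only [not_exists, not_and]
  exact this

lemma sat_trQ_qbfHistory_iff (F : ℕ → List ℕ → ℕ) (R : ℕ → List ℕ → Bool) (E : BExpr)
    {n : ℕ} (qs : List Bool) {k i : ℕ} (hk : 1 ≤ k) (hlen : k + qs.length = n + 1)
    (hi : 2 * (n + 1 - k) ≤ i) (hin : i ≤ 2 * n) (hi0 : 0 < i) (ρ : ℕ → ℕ) :
    Sat F R (qbfHistory n) i ρ (trQ k qs E) ↔ QbfTrue (fun m => decide (ρ m = 1)) k qs E := by
  induction qs generalizing k i ρ with
  | nil =>
    simp only [trQ, QbfTrue, sat_trE_iff,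
      true_mem_qbfHistory_getD_iff (show i - 1 < 2 * n by omega)]
  | cons q qs ih =>
    rw [List.length_cons] at hlen
    have hkn : k ≤ n := by omega
    have step (b : Bool) :
        Sat F R (qbfHistory n) (2 * (n - k) + 1 + b.toNat) (Function.update ρ k b.toNat)
            (trQ (k + 1) qs E) ↔
          QbfTrue (fun m => if m = k then b else decide (ρ m = 1)) (k + 1) qs E := by
      have := Bool.toNat_le b
      rw [ih (by omega) (by omega) (by omega) (by omega) (by omega)]
      congr! with m
      by_cases hm : m = k
      · cases b <;> simp [hm]
      · simp [hm]
    cases q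
    · simp only [trQ, Bool.false_eq_true, if_false, QbfTrue, sat_fmSometime_iff, sat_not_iff,
        sat_all_singleton_iff, not_forall, not_not, exists_prop]
      rw [exists_pred_mem_qbfHistory_iff hk hkn hi hin]
      exact exists_congr step
    · simp only [trQ, if_true, QbfTrue, sat_fmAlways_iff, sat_all_singleton_iff]
      rw [forall_pred_mem_qbfHistory_iff hk hkn hi hin]
      exact forall_congr' step

theorem qbf_reduction_tracelike_general (Q : List Bool) (hQ : Q ≠ [])
    (E : BExpr) (F : ℕ → List ℕ → ℕ) (R : ℕ → List ℕ → Bool) :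
    TraceLike (qbfHistory Q.length) ∧
      ((∀ v : ℕ → Bool, QbfTrue v 1 Q E) ↔
        (∀ ρ : ℕ → ℕ, Sat F R (qbfHistory Q.length) (qbfHistory Q.length).length ρ
          (trQ 1 Q E))) := by
  refine ⟨traceLike_qbfHistory _, ?_⟩
  rw [length_qbfHistory]
  have hn : 0 < Q.length := List.length_pos_iff.mpr hQ
  have key (ρ : ℕ → ℕ) := sat_trQ_qbfHistory_iff F R E Q (i := 2 * Q.length) le_rfl
    (by omega) (by omega) le_rfl (by omega) ρ
  constructor
  · exact fun hv ρ => (key ρ).2 (hv _)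
  · intro hs v
    simpa [Bool.toNat_eq_one] using (key fun m => (v m).toNat).1 (hs _)

/-- For a closed prenex QBF `F ≡ Q₁x₁.…Qₙxₙ.E(x₁,…,xₙ)`, with `φ` the
PTLTL^FO formula `T₁Q₁x₁:p₁.…TₙQₙxₙ:pₙ. E(true(x₁),…,true(xₙ))` (`Tᵢ = G⁻¹` for `∀`,
`Tᵢ = F⁻¹` for `∃`) and `h` the history of `2n` sessions
`{pₙ(0),true(1)}; {pₙ(1),true(1)}; …; {p₁(0),true(1)}; {p₁(1),true(1)}`:
`h` is trace-like, and `F` is true iff `h ⊨ φ`. -/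
theorem qbf_reduction_tracelike (Q : List Bool) (hQ : Q ≠ [])
    (E : BExpr) (hclosed : ∀ x ∈ E.vars, 1 ≤ x ∧ x ≤ Q.length)
    (F : ℕ → List ℕ → ℕ) (R : ℕ → List ℕ → Bool) :
    TraceLike (qbfHistory Q.length) ∧
      ((∀ v : ℕ → Bool, QbfTrue v 1 Q E) ↔
        (∀ ρ : ℕ → ℕ, Sat F R (qbfHistory Q.length) (qbfHistory Q.length).length ρ
          (trQ 1 Q E))) :=
  qbf_reduction_tracelike_general Q hQ E F R
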